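/- Product (ℓ,p)-Gowers–Cauchy–Schwarz: let e be a nonempty finite index set, ℓ ≥ 2 an even integer, 1 ≤ p < ∞, and for each ω ∈ {0,…,ℓ-1}^e let f_ω ∈ L_p(X_e). Then E[∏_{ω ∈ {0,…,ℓ-1}^e} |f_ω|^p(x_e^{(ω)}) | x_e^{(0)},…,x_e^{(ℓ-1)} ∈ X_e] ≤ ∏_{ω ∈ {0,…,ℓ-1}^e} ‖f_ω‖_{□_{ℓ,p}(X_e)}^p. -/

import Mathlib

open MeasureTheory Finset

/-- The `ℓ`-box norm over the coordinates in `e` of a function `f` on the product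
of the probability spaces `(X i, μ i)`. -/
noncomputable def boxNormOn {ι : Type*} [Fintype ι] [DecidableEq ι] {X : ι → Type*}
    [∀ i, MeasurableSpace (X i)] (μ : ∀ i, Measure (X i))
    (e : Finset ι) (ℓ : ℕ) (f : (∀ i, X i) → ℝ) : ℝ :=
  (∫ x : ∀ i, Fin ℓ → X i,
      ∏ ω ∈ Finset.univ.filter (fun ω : ι → Fin ℓ => ∀ i ∉ e, (ω i : ℕ) = 0),
        f (fun i => x i (ω i))
    ∂(Measure.pi fun i => Measure.pi fun _ : Fin ℓ => μ i)) ^ (((ℓ : ℝ) ^ e.card)⁻¹)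


/-- The `(ℓ,p)`-box norm, `‖f‖_{□_{ℓ,p}} = ‖|f|^p‖_{□_ℓ}^{1/p}`. -/
noncomputable def pBoxNormOn {ι : Type*} [Fintype ι] [DecidableEq ι] {X : ι → Type*}
    [∀ i, MeasurableSpace (X i)] (μ : ∀ i, Measure (X i))
    (e : Finset ι) (ℓ : ℕ) (p : ℝ) (f : (∀ i, X i) → ℝ) : ℝ :=
  (boxNormOn μ e ℓ (fun x => |f x| ^ p)) ^ p⁻¹

open scoped ENNReal

/-!
Write `T(G) = ∫ ∏_ω G_ω(x^{(ω)})` for a family of nonnegative functions indexed by the cube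
`β^ι`, `|β| = ℓ`. Fix a coordinate `j` and integrate out the `ℓ` copies of `X_j` first: the
factor `G_ω(x^{(ω)})` sees only the copy `ω j`, so the inner integral factors as `∏_b L_b`, and
Hölder's inequality with `ℓ` equal exponents in the remaining variables gives
`T(G)^ℓ ≤ ∏_b T(G with ω_j frozen to b)`. Freezing the coordinates one by one (the frozen values
are recorded by `Finset.piecewise`) and regrouping the resulting products yields `T(G)^{ℓ^n} ≤ ∏_ω T(fun _ => G_ω)`, whose factors are the `ℓ^n`-th
powers of the box norms. The real statement follows by applying this to `G_ω = |f_ω|^p`.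
-/

open Function

theorem lintegral_prod_pow_le_prod_lintegral_pow {α β : Type*} [MeasurableSpace α] [Fintype β]
    (m : Measure α) {u : β → α → ℝ≥0∞} (hu : ∀ b, AEMeasurable (u b) m) :
    (∫⁻ x, ∏ b, u b x ∂m) ^ Fintype.card β ≤ ∏ b, ∫⁻ x, u b x ^ Fintype.card β ∂m := by
  set n := Fintype.card β
  rcases Nat.eq_zero_or_pos n with hn | hn
  · have := Fintype.card_eq_zero_iff.mp hn
    simp [hn]
  have hn' : (n : ℝ) ≠ 0 := by positivity
  have hroot : ∀ a : ℝ≥0∞, (a ^ n) ^ (n : ℝ)⁻¹ = a := fun a => by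
    rw [← ENNReal.rpow_natCast, ← ENNReal.rpow_mul, mul_inv_cancel₀ hn', ENNReal.rpow_one]
  have holder := ENNReal.lintegral_prod_norm_pow_le (μ := m) univ
    (f := fun b x => u b x ^ n) (fun b _ => (hu b).pow_const n) (p := fun _ => (n : ℝ)⁻¹)
    (by simp [n, hn']) (fun _ _ => by positivity)
  simp only [hroot] at holder
  calc (∫⁻ x, ∏ b, u b x ∂m) ^ n ≤ (∏ b, (∫⁻ x, u b x ^ n ∂m) ^ (n : ℝ)⁻¹) ^ n := by gcongr
    _ = ∏ b, ∫⁻ x, u b x ^ n ∂m := by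
      rw [← prod_pow]
      congr! 1 with b
      rw [← ENNReal.rpow_natCast, ← ENNReal.rpow_mul, inv_mul_cancel₀ hn', ENNReal.rpow_one]

theorem lintegral_fintype_prod_eq_prod {δ : Type*} [Fintype δ] {Y : δ → Type*}
    [∀ i, MeasurableSpace (Y i)] (ν : ∀ i, Measure (Y i)) [∀ i, IsProbabilityMeasure (ν i)]
    {h : ∀ i, Y i → ℝ≥0∞} (hh : ∀ i, Measurable (h i)) :
    ∫⁻ y, ∏ i, h i (y i) ∂Measure.pi ν = ∏ i, ∫⁻ z, h i z ∂ν i := by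
  refine (ProbabilityTheory.lintegral_prod_eq_prod_lintegral_of_indepFun univ _
    (ProbabilityTheory.iIndepFun_pi (μ := ν) fun i => (hh i).aemeasurable)
    fun i => (hh i).comp (measurable_pi_apply i)).trans ?_
  exact prod_congr rfl fun i _ => (measurePreserving_eval ν i).lintegral_comp (hh i)

theorem prod_prod_update_eq_pow {ι β M : Type*} [DecidableEq ι] [Fintype ι] [Fintype β]
    [CommMonoid M] (h : (ι → β) → M) (j : ι) :
    ∏ ω, ∏ b, h (update ω j b) = (∏ ω, h ω) ^ Fintype.card β := by
  let σ : (ι → β) × β → (ι → β) × β := fun q => (update q.1 j q.2, q.1 j)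
  have hσ : Involutive σ := fun q => by simp [σ]
  calc ∏ ω, ∏ b, h (update ω j b) = ∏ q, h (σ q).1 := (Fintype.prod_prod_type' _).symm
    _ = ∏ q : (ι → β) × β, h q.1 := Equiv.prod_comp (hσ.toPerm σ) (fun q => h q.1)
    _ = (∏ ω, h ω) ^ Fintype.card β := by simp [Fintype.prod_prod_type, prod_pow]

theorem lintegral_pow_le_prod_of_slice {δ β : Type*} [Fintype δ] [DecidableEq δ] [Fintype β]
    {Y : δ → Type*} [∀ i, MeasurableSpace (Y i)] {ν : ∀ i, Measure (Y i)}
    [∀ i, SigmaFinite (ν i)] (j : δ) {F : (∀ i, Y i) → ℝ≥0∞} {F' L : β → (∀ i, Y i) → ℝ≥0∞}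
    (hF : Measurable F) (hF' : ∀ b, Measurable (F' b)) (hL : ∀ b, Measurable (L b))
    (hF_slice : ∀ x, ∫⁻ y, F (update x j y) ∂ν j = ∏ b, L b x)
    (hF'_slice : ∀ b x, ∫⁻ y, F' b (update x j y) ∂ν j = L b x ^ Fintype.card β) :
    (∫⁻ x, F x ∂Measure.pi ν) ^ Fintype.card β ≤ ∏ b, ∫⁻ x, F' b x ∂Measure.pi ν := by
  rcases isEmpty_or_nonempty (∀ i, Y i) with hY | ⟨⟨x₀⟩⟩
  · simp [lintegral_of_isEmpty]
  have hmarg {G : (∀ i, Y i) → ℝ≥0∞} (hG : Measurable G) : ∫⁻ x, G x ∂Measure.pi ν =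
      (∫⋯∫⁻_(univ.erase j), (fun x => ∫⁻ y, G (update x j y) ∂ν j) ∂ν) x₀ := by
    rw [lintegral_eq_lmarginal_univ x₀, lmarginal_erase' _ hG (mem_univ j)]
  simp only [hmarg hF, hmarg (hF' _), hF_slice, hF'_slice]
  exact lintegral_prod_pow_le_prod_lintegral_pow _
    fun b => ((hL b).comp measurable_updateFinset).aemeasurable

theorem update_apply_comp {ι β : Type*} [DecidableEq ι] {X : ι → Type*} (x : ∀ i, β → X i)
    (j : ι) (y : β → X j) (ω : ι → β) :
    (fun i => update x j y i (ω i)) = update (fun i => x i (ω i)) j (y (ω j)) := by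
  funext i
  rcases eq_or_ne i j with rfl | hij
  · simp
  · simp [hij]

theorem piecewise_update_of_notMem {ι β : Type*} [DecidableEq ι] {s : Finset ι} {j : ι}
    (hj : j ∉ s) (ω ω' : ι → β) (b : β) :
    s.piecewise ω (update ω' j b) = (insert j s).piecewise (update ω j b) ω' := by
  funext i
  rcases eq_or_ne i j with rfl | hij
  · simp [hj]
  · by_cases hi : i ∈ s <;> simp [hi, hij]

section GowersSlice

variable {ι β : Type*} [Fintype ι] [DecidableEq ι] [Fintype β] [DecidableEq β] {X : ι → Type*}

/-- The factors `G ω (x^{(ω)})` with `ω j = b`, as a function of the `b`-th copy `z` of `x j`. -/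
noncomputable def gowersSlice (G : (ι → β) → (∀ i, X i) → ℝ≥0∞) (j : ι) (b : β)
    (x : ∀ i, β → X i) (z : X j) : ℝ≥0∞ :=
  ∏ ω ∈ univ.filter (fun ω : ι → β => ω j = b), G ω (update (fun i => x i (ω i)) j z)

theorem prod_update_eq_prod_gowersSlice (G : (ι → β) → (∀ i, X i) → ℝ≥0∞) (j : ι)
    (x : ∀ i, β → X i) (y : β → X j) :
    ∏ ω, G ω (fun i => update x j y i (ω i)) = ∏ b, gowersSlice G j b x (y b) := by
  rw [← prod_fiberwise univ (fun ω : ι → β => ω j)]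
  refine prod_congr rfl fun b _ => prod_congr rfl fun ω hω => ?_
  rw [update_apply_comp, (mem_filter.mp hω).2]

theorem gowersSlice_comp_update (G : (ι → β) → (∀ i, X i) → ℝ≥0∞) (j : ι) (b c : β) :
    gowersSlice (fun ω => G (update ω j b)) j c = gowersSlice G j b := by
  funext x z
  refine prod_nbij' (update · j b) (update · j c) (by simp) (by simp) (fun ω hω => ?_)
    (fun ω hω => ?_) (fun ω hω => ?_)
  · simpa [eq_comm] using (mem_filter.mp hω).2
  · simpa [eq_comm] using (mem_filter.mp hω).2
  · congr 1
    funext i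
    rcases eq_or_ne i j with rfl | hij
    · simp
    · simp [hij]

end GowersSlice

section GowersInner

variable {ι β : Type*} [Fintype ι] [DecidableEq ι] [Fintype β] {X : ι → Type*}
  [∀ i, MeasurableSpace (X i)]

/-- `x i b` is the `b`-th copy of the `i`-th coordinate, so `fun i => x i (ω i)` is `x^{(ω)}`. -/
noncomputable def gowersInner (μ : ∀ i, Measure (X i))
    (G : (ι → β) → (∀ i, X i) → ℝ≥0∞) : ℝ≥0∞ :=
  ∫⁻ x : ∀ i, β → X i, ∏ ω, G ω (fun i => x i (ω i))
    ∂Measure.pi fun i => Measure.pi fun _ : β => μ i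

variable (μ : ∀ i, Measure (X i)) [∀ i, IsProbabilityMeasure (μ i)]
  {G : (ι → β) → (∀ i, X i) → ℝ≥0∞}

theorem gowersInner_congr_ae {G' : (ι → β) → (∀ i, X i) → ℝ≥0∞}
    (h : ∀ ω : ι → β, G ω =ᵐ[Measure.pi μ] G' ω) : gowersInner μ G = gowersInner μ G' := by
  have hcomp (ω : ι → β) : MeasurePreserving (fun x : ∀ i, β → X i => fun i => x i (ω i))
      (Measure.pi fun i => Measure.pi fun _ : β => μ i) (Measure.pi μ) :=
    measurePreserving_pi _ _ fun i => measurePreserving_eval _ (ω i)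
  have hall : ∀ᵐ x ∂(Measure.pi fun i => Measure.pi fun _ : β => μ i),
      ∀ ω, G ω (fun i => x i (ω i)) = G' ω (fun i => x i (ω i)) :=
    ae_all_iff.mpr fun ω => (hcomp ω).quasiMeasurePreserving.ae_eq_comp (h ω)
  refine lintegral_congr_ae ?_
  filter_upwards [hall] with x hx
  exact prod_congr rfl fun ω _ => hx ω

variable [DecidableEq β]

theorem gowersInner_pow_le_prod_update (hG : ∀ ω : ι → β, Measurable (G ω)) (j : ι) :
    gowersInner μ G ^ Fintype.card β ≤ ∏ b, gowersInner μ (fun ω => G (update ω j b)) := by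
  have hslice (b : β) : Measurable fun q : (∀ i, β → X i) × X j => gowersSlice G j b q.1 q.2 := by
    unfold gowersSlice
    fun_prop
  refine lintegral_pow_le_prod_of_slice j (L := fun b x => ∫⁻ z, gowersSlice G j b x z ∂μ j)
    (by fun_prop) (fun b => by fun_prop) (fun b => (hslice b).lintegral_prod_right')
    (fun x => ?_) (fun b x => ?_)
  · simp_rw [prod_update_eq_prod_gowersSlice]
    exact lintegral_fintype_prod_eq_prod _ (h := fun b => gowersSlice G j b x)
      fun b => (hslice b).comp measurable_prodMk_left
  · simp_rw [prod_update_eq_prod_gowersSlice, gowersSlice_comp_update]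
    rw [lintegral_fintype_prod_eq_prod _ (h := fun _ => gowersSlice G j b x)
      fun _ => (hslice b).comp measurable_prodMk_left, prod_const, card_univ]

theorem prod_gowersInner_piecewise_le_insert [Nonempty β] (hG : ∀ ω : ι → β, Measurable (G ω))
    {j : ι} {s : Finset ι} (hj : j ∉ s) :
    ∏ ω, gowersInner μ (fun ω' => G (s.piecewise ω ω'))
      ≤ ∏ ω, gowersInner μ (fun ω' => G ((insert j s).piecewise ω ω')) := by
  rw [← ENNReal.pow_le_pow_left_iff (Fintype.card_ne_zero (α := β))]
  calc (∏ ω, gowersInner μ (fun ω' => G (s.piecewise ω ω'))) ^ Fintype.card β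
      = ∏ ω, gowersInner μ (fun ω' => G (s.piecewise ω ω')) ^ Fintype.card β := by
        rw [prod_pow]
    _ ≤ ∏ ω, ∏ b, gowersInner μ (fun ω' => G ((insert j s).piecewise (update ω j b) ω')) :=
        prod_le_prod' fun ω _ => by
          simpa only [piecewise_update_of_notMem hj] using
            gowersInner_pow_le_prod_update μ (fun ω' => hG (s.piecewise ω ω')) j
    _ = (∏ ω, gowersInner μ (fun ω' => G ((insert j s).piecewise ω ω'))) ^ Fintype.card β :=
        prod_prod_update_eq_pow (fun ω => gowersInner μ fun ω' => G ((insert j s).piecewise ω ω')) j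

theorem gowersInner_pow_le_prod [Nonempty β] (hG : ∀ ω : ι → β, Measurable (G ω)) :
    gowersInner μ G ^ (Fintype.card β ^ Fintype.card ι)
      ≤ ∏ ω, gowersInner μ (fun _ : ι → β => G ω) := by
  have hmono (s : Finset ι) : ∏ ω, gowersInner μ (fun ω' => G ((∅ : Finset ι).piecewise ω ω'))
      ≤ ∏ ω, gowersInner μ (fun ω' => G (s.piecewise ω ω')) := by
    induction s using Finset.induction with
    | empty => exact le_rfl
    | insert j s hj ih => exact ih.trans (prod_gowersInner_piecewise_le_insert μ hG hj)
  simpa [Fintype.card_fun, prod_const] using hmono univ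

theorem gowersInner_le_prod_rpow [Nonempty β]
    (hG : ∀ ω : ι → β, AEMeasurable (G ω) (Measure.pi μ)) :
    gowersInner μ G
      ≤ ∏ ω, gowersInner μ (fun _ : ι → β => G ω) ^ ((Fintype.card β : ℝ) ^ Fintype.card ι)⁻¹ := by
  set N := Fintype.card β ^ Fintype.card ι
  have hN : (N : ℝ) ≠ 0 := by positivity
  have hmk (ω : ι → β) := (hG ω).ae_eq_mk
  rw [gowersInner_congr_ae μ hmk]
  simp_rw [gowersInner_congr_ae μ fun _ => hmk _]
  calc gowersInner μ (fun ω => (hG ω).mk)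
      = (gowersInner μ (fun ω => (hG ω).mk) ^ N) ^ (N : ℝ)⁻¹ := by
        rw [← ENNReal.rpow_natCast, ← ENNReal.rpow_mul, mul_inv_cancel₀ hN, ENNReal.rpow_one]
    _ ≤ (∏ ω, gowersInner μ (fun _ : ι → β => (hG ω).mk)) ^ (N : ℝ)⁻¹ := by
        gcongr
        exact gowersInner_pow_le_prod μ fun ω => (hG ω).measurable_mk
    _ = ∏ ω, gowersInner μ (fun _ : ι → β => (hG ω).mk)
          ^ ((Fintype.card β : ℝ) ^ Fintype.card ι)⁻¹ := by
        rw [ENNReal.prod_rpow_of_nonneg (by positivity)]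
        push_cast [N]
        rfl

end GowersInner

theorem ofReal_integral_prod_eq_gowersInner {ι β : Type*} [Fintype ι] [DecidableEq ι] [Fintype β]
    {X : ι → Type*} [∀ i, MeasurableSpace (X i)] (μ : ∀ i, Measure (X i))
    {g : (ι → β) → (∀ i, X i) → ℝ}
    (hg : Integrable (fun x : ∀ i, β → X i => ∏ ω, g ω (fun i => x i (ω i)))
      (Measure.pi fun i => Measure.pi fun _ : β => μ i)) (hg_nonneg : ∀ ω y, 0 ≤ g ω y) :
    ENNReal.ofReal (∫ x, ∏ ω, g ω (fun i => x i (ω i))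
        ∂(Measure.pi fun i => Measure.pi fun _ : β => μ i)) =
      gowersInner μ (fun ω y => ENNReal.ofReal (g ω y)) := by
  rw [ofReal_integral_eq_lintegral_ofReal hg
    (ae_of_all _ fun x => prod_nonneg fun ω _ => hg_nonneg _ _), gowersInner]
  exact lintegral_congr fun x => ENNReal.ofReal_prod_of_nonneg fun ω _ => hg_nonneg _ _

theorem boxNormOn_univ {ι : Type*} [Fintype ι] [DecidableEq ι] {X : ι → Type*}
    [∀ i, MeasurableSpace (X i)] (μ : ∀ i, Measure (X i)) (ℓ : ℕ) (f : (∀ i, X i) → ℝ) :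
    boxNormOn μ univ ℓ f = (∫ x : ∀ i, Fin ℓ → X i, ∏ ω : ι → Fin ℓ, f (fun i => x i (ω i))
      ∂(Measure.pi fun i => Measure.pi fun _ : Fin ℓ => μ i)) ^ (((ℓ : ℝ) ^ Fintype.card ι)⁻¹) := by
  simp [boxNormOn]

theorem gowers_cauchy_schwarz_pow_general {ι : Type*} [Fintype ι] [DecidableEq ι]
    {X : ι → Type*} [∀ i, MeasurableSpace (X i)] (μ : ∀ i, Measure (X i))
    [∀ i, IsProbabilityMeasure (μ i)]
    (ℓ : ℕ) (hℓ : 2 ≤ ℓ)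
    (p : ℝ) (hp : 1 ≤ p)
    (f : (ι → Fin ℓ) → (∀ i, X i) → ℝ)
    (hf : ∀ ω, MemLp (f ω) (ENNReal.ofReal p) (Measure.pi μ))
    (hbox : ∀ ω : ι → Fin ℓ, Integrable
      (fun x : ∀ i, Fin ℓ → X i => ∏ ω' : ι → Fin ℓ, |f ω (fun i => x i (ω' i))| ^ p)
      (Measure.pi fun i => Measure.pi fun _ : Fin ℓ => μ i)) :
    (∫ x : ∀ i, Fin ℓ → X i, ∏ ω : ι → Fin ℓ, |f ω (fun i => x i (ω i))| ^ p
        ∂(Measure.pi fun i => Measure.pi fun _ : Fin ℓ => μ i)) ≤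
      ∏ ω : ι → Fin ℓ, pBoxNormOn μ Finset.univ ℓ p (f ω) ^ p := by
  have : NeZero ℓ := ⟨by omega⟩
  have hnorm (ω : ι → Fin ℓ) : pBoxNormOn μ univ ℓ p (f ω) ^ p =
      (∫ x : ∀ i, Fin ℓ → X i, ∏ ω' : ι → Fin ℓ, |f ω (fun i => x i (ω' i))| ^ p
        ∂(Measure.pi fun i => Measure.pi fun _ : Fin ℓ => μ i)) ^ ((ℓ : ℝ) ^ Fintype.card ι)⁻¹ := by
    rw [pBoxNormOn, boxNormOn_univ, Real.rpow_inv_rpow (by positivity) (by positivity)]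
  simp_rw [hnorm]
  by_cases hint : Integrable (fun x : ∀ i, Fin ℓ → X i => ∏ ω, |f ω (fun i => x i (ω i))| ^ p)
    (Measure.pi fun i => Measure.pi fun _ : Fin ℓ => μ i)
  swap
  · rw [integral_undef hint]
    positivity
  have hG (ω : ι → Fin ℓ) :
      AEMeasurable (fun y => ENNReal.ofReal (|f ω y| ^ p)) (Measure.pi μ) := by
    have := (hf ω).aestronglyMeasurable.aemeasurable
    fun_prop
  rw [← ENNReal.ofReal_le_ofReal_iff (by positivity),
    ofReal_integral_prod_eq_gowersInner μ (g := fun ω y => |f ω y| ^ p) hint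
      fun _ _ => by positivity,
    ENNReal.ofReal_prod_of_nonneg fun _ _ => by positivity]
  refine (gowersInner_le_prod_rpow μ hG).trans_eq (prod_congr rfl fun ω _ => ?_)
  rw [← ENNReal.ofReal_rpow_of_nonneg (by positivity) (by positivity),
    ofReal_integral_prod_eq_gowersInner μ (g := fun _ y => |f ω y| ^ p) (hbox ω)
      fun _ _ => by positivity,
    Fintype.card_fin]

/-- Product Gowers–Cauchy–Schwarz for `p`-th powers and `(ℓ,p)`-box norms. -/
theorem gowers_cauchy_schwarz_pow {ι : Type*} [Fintype ι] [DecidableEq ι] [Nonempty ι]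
    {X : ι → Type*} [∀ i, MeasurableSpace (X i)] (μ : ∀ i, Measure (X i))
    [∀ i, IsProbabilityMeasure (μ i)]
    (ℓ : ℕ) (hℓ : 2 ≤ ℓ) (hev : Even ℓ)
    (p : ℝ) (hp : 1 ≤ p)
    (f : (ι → Fin ℓ) → (∀ i, X i) → ℝ)
    (hf : ∀ ω, MemLp (f ω) (ENNReal.ofReal p) (Measure.pi μ))
    (hbox : ∀ ω : ι → Fin ℓ, Integrable
      (fun x : ∀ i, Fin ℓ → X i => ∏ ω' : ι → Fin ℓ, |f ω (fun i => x i (ω' i))| ^ p)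
      (Measure.pi fun i => Measure.pi fun _ : Fin ℓ => μ i)) :
    (∫ x : ∀ i, Fin ℓ → X i, ∏ ω : ι → Fin ℓ, |f ω (fun i => x i (ω i))| ^ p
        ∂(Measure.pi fun i => Measure.pi fun _ : Fin ℓ => μ i)) ≤
      ∏ ω : ι → Fin ℓ, pBoxNormOn μ Finset.univ ℓ p (f ω) ^ p :=
  gowers_cauchy_schwarz_pow_general μ ℓ hℓ p hp f hf hbox
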